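/- arXiv:1810.00309 — 2 statements merged into one kernel-verified Lean document; each statement's English description precedes it below -/
import Mathlib

section
/- Let n ≥ 1 and let Ψ be a local symplectomorphism of ω₀ on ℝ^{2n} such that on a neighbourhood of 0: p₁∘Ψ = p₁; qᵢ∘Ψ ∈ I_{2i−1} for every i = 1,…,n; and pᵢ∘Ψ − pᵢ ∈ I_{2i−2} for every i = 2,…,n (here pᵢ∘Ψ and qᵢ∘Ψ denote the components of Ψ). Then Ψ is the identity map on a neighbourhood of 0. -/
/-!
If `Ψ` preserves a linear function `ω₀(c, ·)`, then `DΨ`, being symplectic, fixes `c`, so `Ψ`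
commutes with the translations by `c`. Let `e_j` be the coordinate vector dual to the `j`-th
generator of `q₁, p₁, q₂, p₂, …`; the functions `ω₀(e_j, ·)` are then `-p₁, q₁, -p₂, q₂, …`.
Once the first `k` of them are preserved, `Ψ z = Ψ s + (z - s)`, where `s` is `z` with its first
`k` generators set to zero. As `s` lies in the zero set of `I_k`, the hypotheses give
`ω₀(e_k, Ψ s) = ω₀(e_k, s)`, so `ω₀(e_k, ·)` is preserved too. For `k = 2n` we get `s = 0`,
hence `Ψ z = z`.
-/

open Filter Topology

noncomputable section

/-- `ℝ^{2n}` with coordinates `(p, q) = (p₁,…,pₙ,q₁,…,qₙ)`. -/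
abbrev PQ (n : ℕ) : Type := (Fin n → ℝ) × (Fin n → ℝ)

/-- A smooth germ at `0`: a function which is `C^∞` on some neighbourhood of `0`. -/
def SmoothGerm {E F : Type*} [NormedAddCommGroup E] [NormedSpace ℝ E]
    [NormedAddCommGroup F] [NormedSpace ℝ F] (f : E → F) : Prop :=
  ∃ U ∈ 𝓝 (0 : E), ContDiffOn ℝ (⊤ : ℕ∞) f U

/-- The standard symplectic form `ω₀ = Σᵢ dpᵢ∧dqᵢ` on `ℝ^{2n}` as a constant
alternating bilinear form. -/
def omega0 (n : ℕ) (u v : PQ n) : ℝ := ∑ i : Fin n, (u.1 i * v.2 i - u.2 i * v.1 i)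

/-- A local symplectomorphism of `ω₀`: `Ψ(0) = 0`, smooth near `0`, invertible
derivative, and `DΨ(z)` preserves `ω₀` for all `z` near `0`. -/
def IsLocalSymp (n : ℕ) (Ψ : PQ n → PQ n) : Prop :=
  Ψ 0 = 0 ∧ SmoothGerm Ψ ∧ Function.Bijective ⇑(fderiv ℝ Ψ 0) ∧
    ∀ᶠ z in 𝓝 (0 : PQ n), ∀ u v : PQ n,
      omega0 n (fderiv ℝ Ψ z u) (fderiv ℝ Ψ z v) = omega0 n u v

/-- The `j`-th generator (0-indexed) of the list `q₁,p₁,q₂,p₂,…,qₙ,pₙ`. -/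
def genFun (n j : ℕ) (z : PQ n) : ℝ :=
  if h : j / 2 < n then (if j % 2 = 0 then z.2 ⟨j / 2, h⟩ else z.1 ⟨j / 2, h⟩) else 0

/-- Membership (as germs at `0`) in the ideal `I_k` generated by the first `k`
functions of the list `q₁,p₁,q₂,p₂,…,qₙ,pₙ`. -/
def InIdeal (n k : ℕ) (g : PQ n → ℝ) : Prop :=
  ∃ c : Fin k → (PQ n → ℝ), (∀ j, SmoothGerm (c j)) ∧
    ∀ᶠ z in 𝓝 (0 : PQ n), g z = ∑ j : Fin k, c j z * genFun n j.1 z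

section Translation

variable {E : Type*} [NormedAddCommGroup E] [NormedSpace ℝ E]

def fderivFixedSubmodule (f : E → E) (B : Set E) : Submodule ℝ E where
  carrier := {w | ∀ x ∈ B, fderiv ℝ f x w = w}
  add_mem' hv hw x hx := by rw [map_add, hv x hx, hw x hx]
  zero_mem' _ _ := map_zero _
  smul_mem' c _ hw x hx := by rw [map_smul, hw x hx]

theorem Convex.map_add_eq_add_of_mem_fderivFixedSubmodule {f : E → E} {B : Set E}
    (hB : Convex ℝ B) (hf : ∀ x ∈ B, DifferentiableAt ℝ f x) {s w : E}
    (hw : w ∈ fderivFixedSubmodule f B) (hs : s ∈ B) (hsw : s + w ∈ B) :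
    f (s + w) = f s + w := by
  have hderiv : ∀ t ∈ Set.Icc (0 : ℝ) 1,
      HasDerivAt (fun t : ℝ => f (s + t • w) - t • w) 0 t := by
    intro t ht
    have hseg := hB.add_smul_mem hs hsw ht
    have hline : HasDerivAt (fun t : ℝ => s + t • w) w t := by
      simpa using ((hasDerivAt_id t).smul_const w).const_add s
    have h := ((hf _ hseg).hasFDerivAt.comp_hasDerivAt t hline).sub
      ((hasDerivAt_id t).smul_const w)
    rwa [hw _ hseg, one_smul, sub_self] at h
  have hconst := constant_of_has_deriv_right_zero
    (fun t ht => (hderiv t ht).continuousAt.continuousWithinAt)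
    (fun t ht => (hderiv t (Set.Ico_subset_Icc_self ht)).hasDerivWithinAt) 1
    (Set.right_mem_Icc.2 zero_le_one)
  simpa [sub_eq_iff_eq_add] using hconst

end Translation

section Symplectic

variable {n : ℕ}

def omega0Left (n : ℕ) (c : PQ n) : PQ n →L[ℝ] ℝ :=
  LinearMap.toContinuousLinearMap
    { toFun := omega0 n c
      map_add' := fun u v => by
        simp only [omega0, ← Finset.sum_add_distrib, Prod.fst_add, Prod.snd_add, Pi.add_apply]
        exact Finset.sum_congr rfl fun _ _ => by ring
      map_smul' := fun a u => by
        simp only [omega0, Finset.mul_sum, Prod.smul_fst, Prod.smul_snd, Pi.smul_apply,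
          smul_eq_mul, RingHom.id_apply]
        exact Finset.sum_congr rfl fun _ _ => by ring }

@[simp]
theorem omega0Left_apply (c v : PQ n) : omega0Left n c v = omega0 n c v := rfl

theorem omega0_sub_left (a b v : PQ n) :
    omega0 n (a - b) v = omega0 n a v - omega0 n b v := by
  simp only [omega0, ← Finset.sum_sub_distrib, Prod.fst_sub, Prod.snd_sub, Pi.sub_apply]
  exact Finset.sum_congr rfl fun _ _ => by ring

theorem omega0_single_zero (i : Fin n) (v : PQ n) :
    omega0 n (Pi.single i 1, 0) v = v.2 i := by
  simp [omega0, Pi.single_apply]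

theorem omega0_zero_single (i : Fin n) (v : PQ n) :
    omega0 n (0, Pi.single i 1) v = -v.1 i := by
  simp [omega0, Pi.single_apply]

theorem eq_zero_of_forall_omega0_eq_zero {a : PQ n} (h : ∀ v, omega0 n a v = 0) : a = 0 := by
  ext i
  · simpa [omega0, Pi.single_apply] using h (0, Pi.single i 1)
  · simpa [omega0, Pi.single_apply] using h (Pi.single i 1, 0)

theorem surjective_of_omega0_map_map {D : PQ n →L[ℝ] PQ n}
    (hD : ∀ u v, omega0 n (D u) (D v) = omega0 n u v) : Function.Surjective D := by
  refine LinearMap.injective_iff_surjective.1 ((injective_iff_map_eq_zero D).2 fun u hu => ?_)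
  exact eq_zero_of_forall_omega0_eq_zero fun v => by
    rw [← hD, hu]
    simp [omega0]

theorem HasFDerivAt.apply_eq_self_of_omega0_comp_eventuallyEq {Ψ : PQ n → PQ n} {x : PQ n}
    {D : PQ n →L[ℝ] PQ n} (hΨ : HasFDerivAt Ψ D x)
    (hD : ∀ u v, omega0 n (D u) (D v) = omega0 n u v) {c : PQ n}
    (hc : (fun z => omega0 n c (Ψ z)) =ᶠ[𝓝 x] omega0 n c) : D c = c := by
  have hcomp : (omega0Left n c).comp D = omega0Left n c :=
    ((omega0Left n c).hasFDerivAt.comp x hΨ).unique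
      ((omega0Left n c).hasFDerivAt.congr_of_eventuallyEq hc)
  refine sub_eq_zero.1 (eq_zero_of_forall_omega0_eq_zero fun w => ?_)
  obtain ⟨v, rfl⟩ := surjective_of_omega0_map_map hD w
  rw [omega0_sub_left, hD, ← omega0Left_apply, ← omega0Left_apply,
    ← ContinuousLinearMap.comp_apply, hcomp, sub_self]

end Symplectic

section Generators

variable {n : ℕ}

/-- The coordinate vector dual to `genFun n j`. -/
def genVec (n j : ℕ) : PQ n :=
  if h : j / 2 < n then
    (if j % 2 = 0 then (0, Pi.single ⟨j / 2, h⟩ 1) else (Pi.single ⟨j / 2, h⟩ 1, 0))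
  else 0

theorem genVec_two_mul {m : ℕ} (hm : m < n) : genVec n (2 * m) = (0, Pi.single ⟨m, hm⟩ 1) := by
  simp [genVec, hm]

theorem genVec_two_mul_add_one {m : ℕ} (hm : m < n) :
    genVec n (2 * m + 1) = (Pi.single ⟨m, hm⟩ 1, 0) := by
  simp [genVec, hm, Nat.add_div]

theorem genVec_of_le {j : ℕ} (hj : 2 * n ≤ j) : genVec n j = 0 := by
  simp [genVec, show ¬ j / 2 < n by omega]

theorem genFun_two_mul {m : ℕ} (hm : m < n) (z : PQ n) : genFun n (2 * m) z = z.2 ⟨m, hm⟩ := by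
  simp [genFun, hm]

theorem eq_sum_genVec (w : PQ n) :
    w = ∑ i : Fin n, (w.1 i • genVec n (2 * i + 1) + w.2 i • genVec n (2 * i)) := by
  have hp (i : Fin n) : genVec n (2 * i + 1) = (Pi.single i 1, 0) := genVec_two_mul_add_one i.2
  have hq (i : Fin n) : genVec n (2 * i) = (0, Pi.single i 1) := genVec_two_mul i.2
  ext i <;> simp [hp, hq, Prod.fst_sum, Prod.snd_sum, Finset.sum_apply, Pi.single_apply]

/-- `z` with the coordinates `genFun n j`, `j < k`, set to zero. -/
def zeroFirst (n k : ℕ) (z : PQ n) : PQ n :=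
  (fun i => if 2 * i.1 + 1 < k then 0 else z.1 i, fun i => if 2 * i.1 < k then 0 else z.2 i)

theorem genFun_zeroFirst {j k : ℕ} (hj : j < k) (z : PQ n) : genFun n j (zeroFirst n k z) = 0 := by
  unfold genFun zeroFirst
  dsimp only
  split_ifs <;> first | rfl | omega

theorem norm_zeroFirst_le (k : ℕ) (z : PQ n) : ‖zeroFirst n k z‖ ≤ ‖z‖ := by
  refine max_le_max ?_ ?_ <;>
  refine (pi_norm_le_iff_of_nonneg (norm_nonneg _)).2 fun i => ?_ <;>
  dsimp only [zeroFirst] <;> split_ifs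
  all_goals first | exact norm_le_pi_norm _ i | simp

theorem zeroFirst_two_mul_self (z : PQ n) : zeroFirst n (2 * n) z = 0 := by
  ext i
  · simp [zeroFirst, show 2 * i.1 + 1 < 2 * n by omega]
  · simp [zeroFirst]

theorem sub_zeroFirst_mem_span (k : ℕ) (z : PQ n) :
    z - zeroFirst n k z ∈ Submodule.span ℝ (genVec n '' Set.Iio k) := by
  rw [eq_sum_genVec (z - zeroFirst n k z)]
  refine Submodule.sum_mem _ fun i _ => Submodule.add_mem _ ?_ ?_
  · by_cases h : 2 * i.1 + 1 < k
    · exact Submodule.smul_mem _ _ (Submodule.subset_span ⟨_, h, rfl⟩)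
    · simp [zeroFirst, h]
  · by_cases h : 2 * i.1 < k
    · exact Submodule.smul_mem _ _ (Submodule.subset_span ⟨_, h, rfl⟩)
    · simp [zeroFirst, h]

theorem InIdeal.eventually_eq_zero {k : ℕ} {g : PQ n → ℝ} (hg : InIdeal n k g) :
    ∀ᶠ z in 𝓝 0, (∀ j < k, genFun n j z = 0) → g z = 0 := by
  obtain ⟨c, -, hc⟩ := hg
  filter_upwards [hc] with z hz hgen
  simp [hz, hgen _ (Fin.is_lt _)]

end Generators

section Isotropy

variable {n : ℕ} {Ψ : PQ n → PQ n} {B : Set (PQ n)}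

theorem map_eq_map_zeroFirst_add (hBc : Convex ℝ B) (hBz : ∀ z ∈ B, ∀ k, zeroFirst n k z ∈ B)
    (hdiff : ∀ x ∈ B, DifferentiableAt ℝ Ψ x) {k : ℕ}
    (hk : ∀ j < k, genVec n j ∈ fderivFixedSubmodule Ψ B) {z : PQ n} (hz : z ∈ B) :
    Ψ z = Ψ (zeroFirst n k z) + (z - zeroFirst n k z) := by
  have hspan : Submodule.span ℝ (genVec n '' Set.Iio k) ≤ fderivFixedSubmodule Ψ B :=
    Submodule.span_le.2 <| Set.image_subset_iff.2 hk
  have h := hBc.map_add_eq_add_of_mem_fderivFixedSubmodule hdiff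
    (hspan (sub_zeroFirst_mem_span k z)) (hBz z hz k) (by rwa [add_sub_cancel])
  rwa [add_sub_cancel] at h

theorem genVec_mem_fderivFixedSubmodule (hBo : IsOpen B) (hBc : Convex ℝ B)
    (hBz : ∀ z ∈ B, ∀ k, zeroFirst n k z ∈ B) (hdiff : ∀ x ∈ B, DifferentiableAt ℝ Ψ x)
    (hω : ∀ x ∈ B, ∀ u v, omega0 n (fderiv ℝ Ψ x u) (fderiv ℝ Ψ x v) = omega0 n u v)
    (hcoord : ∀ z ∈ B, ∀ k < 2 * n, (∀ j < k, genFun n j z = 0) →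
      omega0 n (genVec n k) (Ψ z) = omega0 n (genVec n k) z) (k : ℕ) :
    genVec n k ∈ fderivFixedSubmodule Ψ B := by
  induction k using Nat.strong_induction_on with
  | _ k ih =>
  rcases lt_or_ge k (2 * n) with hk | hk
  · have hpres : ∀ z ∈ B, omega0 n (genVec n k) (Ψ z) = omega0 n (genVec n k) z := by
      intro z hz
      have hs := hBz z hz k
      rw [map_eq_map_zeroFirst_add hBc hBz hdiff ih hz, ← omega0Left_apply, map_add, map_sub]
      simp only [omega0Left_apply]
      rw [hcoord _ hs k hk fun j hj => genFun_zeroFirst hj z, add_sub_cancel]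
    exact fun x hx => (hdiff x hx).hasFDerivAt.apply_eq_self_of_omega0_comp_eventuallyEq
      (hω x hx) (Filter.eventuallyEq_of_mem (hBo.mem_nhds hx) hpres)
  · rw [genVec_of_le hk]
    exact Submodule.zero_mem _

end Isotropy

theorem eventually_omega0_genVec_map_eq {n : ℕ} (hn : 1 ≤ n) {Ψ : PQ n → PQ n}
    (hp1 : ∀ᶠ z in 𝓝 (0 : PQ n), (Ψ z).1 ⟨0, hn⟩ = z.1 ⟨0, hn⟩)
    (hP : ∀ i : Fin n, 1 ≤ i.1 → InIdeal n (2 * i.1) (fun z => (Ψ z).1 i - z.1 i))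
    (hQ : ∀ i : Fin n, InIdeal n (2 * i.1 + 1) (fun z => (Ψ z).2 i)) :
    ∀ᶠ z in 𝓝 (0 : PQ n), ∀ k < 2 * n, (∀ j < k, genFun n j z = 0) →
      omega0 n (genVec n k) (Ψ z) = omega0 n (genVec n k) z := by
  refine (Filter.eventually_all_finite (Set.finite_Iio (2 * n))).2 fun k hk => ?_
  obtain ⟨m, rfl | rfl⟩ := Nat.even_or_odd' k
  · have hm : m < n := by simp only [Set.mem_Iio] at hk; omega
    have hpm : ∀ᶠ z in 𝓝 (0 : PQ n), (∀ j < 2 * m, genFun n j z = 0) →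
        (Ψ z).1 ⟨m, hm⟩ = z.1 ⟨m, hm⟩ := by
      rcases Nat.eq_zero_or_pos m with rfl | hm0
      · filter_upwards [hp1] with z hz _ using hz
      · filter_upwards [(hP ⟨m, hm⟩ hm0).eventually_eq_zero] with z hz hgen
        exact sub_eq_zero.1 (hz hgen)
    filter_upwards [hpm] with z hz hgen
    simp only [genVec_two_mul hm, omega0_zero_single, hz hgen]
  · have hm : m < n := by simp only [Set.mem_Iio] at hk; omega
    filter_upwards [(hQ ⟨m, hm⟩).eventually_eq_zero] with z hz hgen
    have hzm : z.2 ⟨m, hm⟩ = 0 := genFun_two_mul hm z ▸ hgen (2 * m) (Nat.lt_succ_self _)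
    simp only [genVec_two_mul_add_one hm, omega0_single_zero, hz hgen, hzm]

/-- any local symplectomorphism of `ω₀` preserving `p₁`, with
`qᵢ∘Ψ ∈ I_{2i−1}` for all `i` and `pᵢ∘Ψ − pᵢ ∈ I_{2i−2}` for `i ≥ 2`, is the
identity near `0`. -/
theorem isotropy_is_identity (n : ℕ) (hn : 1 ≤ n) (Ψ : PQ n → PQ n)
    (hΨ : IsLocalSymp n Ψ)
    (hp1 : ∀ᶠ z in 𝓝 (0 : PQ n), (Ψ z).1 ⟨0, hn⟩ = z.1 ⟨0, hn⟩)
    (hP : ∀ i : Fin n, 1 ≤ i.1 → InIdeal n (2 * i.1) (fun z => (Ψ z).1 i - z.1 i))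
    (hQ : ∀ i : Fin n, InIdeal n (2 * i.1 + 1) (fun z => (Ψ z).2 i)) :
    ∀ᶠ z in 𝓝 (0 : PQ n), Ψ z = z := by
  obtain ⟨hΨ0, ⟨U, hU, hΨU⟩, -, hω⟩ := hΨ
  have hint : ∀ᶠ z in 𝓝 (0 : PQ n), z ∈ interior U := interior_mem_nhds.2 hU
  obtain ⟨r, hr, hball⟩ := Metric.eventually_nhds_iff_ball.1 <|
    hint.and (hω.and (eventually_omega0_genVec_map_eq hn hp1 hP hQ))
  have hdiff : ∀ x ∈ Metric.ball (0 : PQ n) r, DifferentiableAt ℝ Ψ x := fun x hx =>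
    ((hΨU.mono interior_subset).differentiableOn (by simp)).differentiableAt
      (isOpen_interior.mem_nhds (hball x hx).1)
  have hzero : ∀ z ∈ Metric.ball (0 : PQ n) r, ∀ k, zeroFirst n k z ∈ Metric.ball 0 r :=
    fun z hz k => mem_ball_zero_iff.2 ((norm_zeroFirst_le k z).trans_lt (mem_ball_zero_iff.1 hz))
  have hfix := genVec_mem_fderivFixedSubmodule Metric.isOpen_ball (convex_ball 0 r) hzero hdiff
    (fun x hx => (hball x hx).2.1) (fun z hz => (hball z hz).2.2)
  filter_upwards [Metric.ball_mem_nhds 0 hr] with z hz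
  simpa [zeroFirst_two_mul_self, hΨ0] using
    map_eq_map_zeroFirst_add (convex_ball 0 r) hzero hdiff (fun j _ => hfix j) hz (k := 2 * n)
end
end

section
/- Let r₁ and r₂ be smooth germs of one real variable with r₁(0)=r₂(0)=0, r₁′(0) ≠ 0 and r₂′(0) ≠ 0. Suppose Ψ is a local symplectomorphism of dx∧dy on ℝ² whose second component equals y (i.e. Ψ(x,y) = (X(x,y), y) near 0) and such that (x² + r₂(y))∘Ψ = x² + r₁(y) on a neighbourhood of 0. Then Ψ is the identity map on a neighbourhood of 0 and r₁ = r₂ as germs at 0; in particular the function r in the planar normal form (f, H) = (y, {x² + r(y) = 0}) is a functional invariant. -/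
open Filter Topology

noncomputable section

/-- A local symplectomorphism of the area form `dx∧dy` on `ℝ²`: `Ψ(0) = 0`,
smooth near `0`, with `det DΨ(z) = 1` for all `z` near `0`. -/
def IsLocalSymp2 (Ψ : ℝ × ℝ → ℝ × ℝ) : Prop :=
  Ψ 0 = 0 ∧ SmoothGerm Ψ ∧
    ∀ᶠ z in 𝓝 (0 : ℝ × ℝ), (fderiv ℝ Ψ z).det = 1

/-- The Poisson bracket on `(ℝ², dx∧dy)`: `{F,G} = ∂ₓF·∂_yG − ∂_yF·∂ₓG`. -/
def pb2 (F G : ℝ × ℝ → ℝ) (z : ℝ × ℝ) : ℝ :=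
  fderiv ℝ F z (1, 0) * fderiv ℝ G z (0, 1) - fderiv ℝ F z (0, 1) * fderiv ℝ G z (1, 0)

/-!
Write `Ψ = (X, y)`. The Jacobian of `Ψ` is triangular, so `det DΨ = 1` says `∂ₓX = 1`.
Differentiating `X² + r₂(y) = x² + r₁(y)` in `x` then gives `2X = 2x`, so `Ψ` is the
identity, and the conjugacy restricted to `x = 0` reads `r₂ = r₁`.
-/

theorem LinearMap.det_prod_eq {R : Type*} [CommRing R] (L : R × R →ₗ[R] R × R) :
    LinearMap.det L = (L (1, 0)).1 * (L (0, 1)).2 - (L (0, 1)).1 * (L (1, 0)).2 := by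
  rw [← LinearMap.det_toMatrix (Module.Basis.finTwoProd R), Matrix.det_fin_two]
  simp [LinearMap.toMatrix_apply]

theorem LinearMap.det_eq_fst_of_snd_apply {R : Type*} [CommRing R] (L : R × R →ₗ[R] R × R)
    (hL : ∀ v, (L v).2 = v.2) : LinearMap.det L = (L (1, 0)).1 := by
  simp [LinearMap.det_prod_eq, hL]

theorem SmoothGerm.eventually_differentiableAt {E F : Type*} [NormedAddCommGroup E]
    [NormedSpace ℝ E] [NormedAddCommGroup F] [NormedSpace ℝ F] {f : E → F} (hf : SmoothGerm f) :
    ∀ᶠ z in 𝓝 (0 : E), DifferentiableAt ℝ f z := by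
  obtain ⟨U, hU, hfU⟩ := hf
  filter_upwards [eventually_mem_nhds_iff.mpr hU] with z hz
  exact (hfU.contDiffAt hz).differentiableAt (by simp)

theorem HasFDerivAt.snd_apply_of_eventually_snd_eq {E F : Type*} [NormedAddCommGroup E]
    [NormedSpace ℝ E] [NormedAddCommGroup F] [NormedSpace ℝ F]
    {Ψ : E × F → E × F} {D : E × F →L[ℝ] E × F} {z : E × F} (hΨ : HasFDerivAt Ψ D z)
    (hsnd : ∀ᶠ w in 𝓝 z, (Ψ w).2 = w.2) (v : E × F) : (D v).2 = v.2 := by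
  have h : (ContinuousLinearMap.snd ℝ E F).comp D = ContinuousLinearMap.snd ℝ E F :=
    hΨ.snd.unique (hasFDerivAt_snd.congr_of_eventuallyEq hsnd)
  simpa using congrArg (fun L : E × F →L[ℝ] F => L v) h

theorem HasFDerivAt.hasDerivAt_fst_of_det_eq_one {Ψ : ℝ × ℝ → ℝ × ℝ} {D : ℝ × ℝ →L[ℝ] ℝ × ℝ}
    {z : ℝ × ℝ} (hΨ : HasFDerivAt Ψ D z) (hdet : D.det = 1)
    (hsnd : ∀ᶠ w in 𝓝 z, (Ψ w).2 = w.2) : HasDerivAt (fun x => (Ψ (x, z.2)).1) 1 z.1 := by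
  have hline : HasDerivAt (fun x : ℝ => (x, z.2)) (1, 0) z.1 :=
    (hasDerivAt_id z.1).prodMk (hasDerivAt_const z.1 z.2)
  have hD : (D (1, 0)).1 = 1 :=
    ((D : ℝ × ℝ →ₗ[ℝ] ℝ × ℝ).det_eq_fst_of_snd_apply
      (hΨ.snd_apply_of_eventually_snd_eq hsnd)).symm.trans hdet
  have hcomp : HasDerivAt (fun x => Ψ (x, z.2)) (D (1, 0)) z.1 := hΨ.comp_hasDerivAt z.1 hline
  have hX : HasDerivAt (fun x => (Ψ (x, z.2)).1) (D (1, 0)).1 z.1 := hcomp.fst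
  rwa [hD] at hX

theorem eq_of_hasDerivAt_one_of_sq_sub_sq_eventuallyEq {𝕜 : Type*} [NontriviallyNormedField 𝕜]
    [CharZero 𝕜] {X : 𝕜 → 𝕜} {x c : 𝕜} (hX : HasDerivAt X 1 x)
    (hc : ∀ᶠ t in 𝓝 x, X t ^ 2 - t ^ 2 = c) : X x = x := by
  have h : 2 * X x - 2 * x = 0 := by
    have hu := (hX.pow 2).sub (hasDerivAt_pow 2 x)
    simp only [Nat.cast_ofNat, Nat.add_one_sub_one, pow_one, mul_one] at hu
    exact hu.unique ((hasDerivAt_const x c).congr_of_eventuallyEq hc)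
  linear_combination h / 2

theorem eq_self_of_conj_sq_add {r₁ r₂ : ℝ → ℝ} {Ψ : ℝ × ℝ → ℝ × ℝ} {D : ℝ × ℝ →L[ℝ] ℝ × ℝ}
    {z : ℝ × ℝ} (hΨ : HasFDerivAt Ψ D z) (hdet : D.det = 1)
    (h : ∀ᶠ w in 𝓝 z, (Ψ w).2 = w.2 ∧ (Ψ w).1 ^ 2 + r₂ ((Ψ w).2) = w.1 ^ 2 + r₁ w.2) :
    Ψ z = z := by
  have hline : Tendsto (fun x : ℝ => (x, z.2)) (𝓝 z.1) (𝓝 z) :=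
    (continuous_id.prodMk continuous_const).tendsto' _ _ rfl
  have hfst : (Ψ (z.1, z.2)).1 = z.1 := by
    refine eq_of_hasDerivAt_one_of_sq_sub_sq_eventuallyEq
      (hΨ.hasDerivAt_fst_of_det_eq_one hdet (h.mono fun _ hw => hw.1)) (c := r₁ z.2 - r₂ z.2) ?_
    filter_upwards [hline.eventually h] with x ⟨hsnd, hconj⟩
    rw [hsnd] at hconj
    linarith
  exact Prod.ext hfst h.self_of_nhds.1

theorem planar_invariant_general (r₁ r₂ : ℝ → ℝ)
    (Ψ : ℝ × ℝ → ℝ × ℝ) (hΨ : IsLocalSymp2 Ψ)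
    (hy : ∀ᶠ z in 𝓝 (0 : ℝ × ℝ), (Ψ z).2 = z.2)
    (hconj : ∀ᶠ z in 𝓝 (0 : ℝ × ℝ),
      (Ψ z).1 ^ 2 + r₂ ((Ψ z).2) = z.1 ^ 2 + r₁ z.2) :
    (∀ᶠ z in 𝓝 (0 : ℝ × ℝ), Ψ z = z) ∧ ∀ᶠ y in 𝓝 (0 : ℝ), r₁ y = r₂ y := by
  obtain ⟨-, hsmooth, hdet⟩ := hΨ
  have hid : ∀ᶠ z in 𝓝 (0 : ℝ × ℝ), Ψ z = z := by
    filter_upwards [hsmooth.eventually_differentiableAt, hdet, (hy.and hconj).eventually_nhds]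
      with z hdiff hdetz hz
    exact eq_self_of_conj_sq_add hdiff.hasFDerivAt hdetz hz
  refine ⟨hid, ?_⟩
  have hvert : Tendsto (fun y : ℝ => ((0 : ℝ), y)) (𝓝 0) (𝓝 0) :=
    (continuous_const.prodMk continuous_id).tendsto' _ _ rfl
  filter_upwards [hvert.eventually (hid.and hconj)] with y ⟨hfix, hconj0⟩
  rw [hfix] at hconj0
  simpa using hconj0.symm

/-- the function `r` in the planar normal form
`(f, H) = (y, {x² + r(y) = 0})` is a functional invariant: any local
symplectomorphism of `dx∧dy` fixing `y` and sending `x² + r₂(y)` to `x² + r₁(y)`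
is the identity, and `r₁ = r₂` as germs. -/
theorem planar_invariant (r₁ r₂ : ℝ → ℝ)
    (hr₁sm : SmoothGerm r₁) (hr₂sm : SmoothGerm r₂)
    (hr₁0 : r₁ 0 = 0) (hr₂0 : r₂ 0 = 0)
    (hr₁d : deriv r₁ 0 ≠ 0) (hr₂d : deriv r₂ 0 ≠ 0)
    (Ψ : ℝ × ℝ → ℝ × ℝ) (hΨ : IsLocalSymp2 Ψ)
    (hy : ∀ᶠ z in 𝓝 (0 : ℝ × ℝ), (Ψ z).2 = z.2)
    (hconj : ∀ᶠ z in 𝓝 (0 : ℝ × ℝ),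
      (Ψ z).1 ^ 2 + r₂ ((Ψ z).2) = z.1 ^ 2 + r₁ z.2) :
    (∀ᶠ z in 𝓝 (0 : ℝ × ℝ), Ψ z = z) ∧ ∀ᶠ y in 𝓝 (0 : ℝ), r₁ y = r₂ y :=
  planar_invariant_general r₁ r₂ Ψ hΨ hy hconj
end
end
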